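/- Let x : [a,b] → ℝⁿ be absolutely continuous with x(t) ∈ C for all t ∈ [a,b], where C ⊆ ℝⁿ. Then for almost every t ∈ (a,b), the derivative x'(t) exists and x'(t) ∈ T_C(x(t)), the contingent cone of C at x(t). -/

import Mathlib

open Filter Set MeasureTheory

/-- Absolute continuity of a function on the interval `[a, b]`. -/
def AbsolutelyContinuousOnInterval' {X : Type*} [PseudoMetricSpace X]
    (f : ℝ → X) (a b : ℝ) : Prop :=
  ∀ ε > (0 : ℝ), ∃ δ > (0 : ℝ), ∀ (k : ℕ) (s t : Fin k → ℝ),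
    (∀ i, s i ∈ Set.Icc a b ∧ t i ∈ Set.Icc a b ∧ s i ≤ t i) →
    (Pairwise fun i j => Disjoint (Set.Ioo (s i) (t i)) (Set.Ioo (s j) (t j))) →
    (∑ i, (t i - s i)) < δ → (∑ i, dist (f (s i)) (f (t i))) < ε

/-- The contingent cone of `C` at `y` (sequence characterization). -/
def contingentCone {n : ℕ} (C : Set (EuclideanSpace ℝ (Fin n)))
    (y : EuclideanSpace ℝ (Fin n)) : Set (EuclideanSpace ℝ (Fin n)) :=
  {v | ∃ (h : ℕ → ℝ) (w : ℕ → EuclideanSpace ℝ (Fin n)),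
      (∀ i, 0 < h i) ∧ Filter.Tendsto h Filter.atTop (nhds 0) ∧
        Filter.Tendsto w Filter.atTop (nhds v) ∧ ∀ i, y + h i • w i ∈ C}

/-!
An absolutely continuous function has bounded variation, so by Lebesgue's theorem it is
differentiable almost everywhere. At an interior point `t` of differentiability, the right
difference quotients `w i = (x (t + h i) - x t) / h i` along any `h i → 0⁺` converge to `x' t`,
and `x t + h i • w i = x (t + h i) ∈ C`.
-/

open Topology

theorem AbsolutelyContinuousOnInterval'.absolutelyContinuousOnInterval {X : Type*}
    [PseudoMetricSpace X] {f : ℝ → X} {a b : ℝ} (hab : a ≤ b)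
    (hf : AbsolutelyContinuousOnInterval' f a b) : AbsolutelyContinuousOnInterval f a b := by
  rw [absolutelyContinuousOnInterval_iff]
  intro ε hε
  obtain ⟨δ, hδ, hfδ⟩ := hf ε hε
  refine ⟨δ, hδ, ?_⟩
  rintro ⟨m, I⟩ ⟨hI, hdisj⟩ hlen
  rw [uIcc_of_le hab] at hI
  have hterm : ∀ i, dist (f (min (I i).1 (I i).2)) (f (max (I i).1 (I i).2)) =
      dist (f (I i).1) (f (I i).2) := fun i => by
    rcases le_total (I i).1 (I i).2 with h | h
    · rw [min_eq_left h, max_eq_right h]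
    · rw [min_eq_right h, max_eq_left h, dist_comm]
  have key := hfδ m (fun i => min (I i).1 (I i).2) (fun i => max (I i).1 (I i).2)
    (fun i => have hi := hI i (Finset.mem_range.2 i.2)
      ⟨min_rec' (· ∈ Icc a b) hi.1 hi.2, max_rec' (· ∈ Icc a b) hi.1 hi.2, min_le_max⟩)
    (fun i j hij => (hdisj (Finset.mem_range.2 i.2) (Finset.mem_range.2 j.2)
      (Fin.val_injective.ne hij)).mono Ioo_subset_Ioc_self Ioo_subset_Ioc_self)
    (by rw [Fin.sum_univ_eq_sum_range (fun i => max (I i).1 (I i).2 - min (I i).1 (I i).2)]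
        simpa [max_sub_min_eq_abs', Real.dist_eq] using hlen)
  simpa [hterm, Fin.sum_univ_eq_sum_range (fun i => dist (f (I i).1) (f (I i).2))] using key

theorem mem_contingentCone_of_hasDerivWithinAt_Ioi {n : ℕ} {C : Set (EuclideanSpace ℝ (Fin n))}
    {x : ℝ → EuclideanSpace ℝ (Fin n)} {t : ℝ} {v : EuclideanSpace ℝ (Fin n)}
    (hv : HasDerivWithinAt x v (Ioi t) t) (hC : ∀ᶠ s in 𝓝[>] t, x s ∈ C) :
    v ∈ contingentCone C (x t) := by
  obtain ⟨u, htu, hu⟩ := mem_nhdsGT_iff_exists_Ioo_subset.1 hC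
  set h : ℕ → ℝ := fun i => (u - t) / (i + 2)
  have hpos : ∀ i, 0 < h i := fun i => div_pos (sub_pos.2 htu) (by positivity)
  have hlt : ∀ i, h i < u - t := fun i =>
    div_lt_self (sub_pos.2 htu) (by linarith [(Nat.cast_nonneg i : (0 : ℝ) ≤ i)])
  have hto0 : Tendsto h atTop (𝓝 0) :=
    tendsto_const_nhds.div_atTop (tendsto_natCast_atTop_atTop.atTop_add tendsto_const_nhds)
  have hright : Tendsto (fun i => t + h i) atTop (𝓝[>] t) :=
    tendsto_nhdsWithin_iff.2 ⟨by simpa using tendsto_const_nhds.add hto0,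
      Eventually.of_forall fun i => lt_add_of_pos_right t (hpos i)⟩
  refine ⟨h, fun i => slope x t (t + h i), hpos, hto0,
    ((hasDerivWithinAt_iff_tendsto_slope' self_notMem_Ioi).1 hv).comp hright, fun i => ?_⟩
  have hslope := sub_smul_slope_vadd x t (t + h i)
  rw [add_sub_cancel_left, vadd_eq_add] at hslope
  rw [add_comm, hslope]
  exact hu ⟨lt_add_of_pos_right t (hpos i), by linarith [hlt i]⟩

theorem stmt_8 {n : ℕ} (a b : ℝ) (hab : a ≤ b)
    (C : Set (EuclideanSpace ℝ (Fin n)))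
    (x : ℝ → EuclideanSpace ℝ (Fin n))
    (hAC : AbsolutelyContinuousOnInterval' x a b)
    (hmem : ∀ t ∈ Set.Icc a b, x t ∈ C) :
    ∀ᵐ t ∂(volume.restrict (Set.Ioo a b)),
      ∃ v, HasDerivAt x v t ∧ v ∈ contingentCone C (x t) := by
  have hdiff := (hAC.absolutelyContinuousOnInterval hab).boundedVariationOn
    |>.ae_differentiableAt_of_mem_uIcc
  rw [uIcc_of_le hab] at hdiff
  filter_upwards [ae_restrict_of_ae hdiff, ae_restrict_mem measurableSet_Ioo] with t hxt ht
  have hx := (hxt (Ioo_subset_Icc_self ht)).hasDerivAt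
  exact ⟨_, hx, mem_contingentCone_of_hasDerivWithinAt_Ioi hx.hasDerivWithinAt
    (nhdsWithin_le_nhds (mem_of_superset (Icc_mem_nhds ht.1 ht.2) hmem))⟩
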